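/- arXiv:2209.12414 — 4 statements merged into one kernel-verified Lean document; each statement's English description precedes it below -/
import Mathlib

section
/- For the chessboard complex Δ_{m,n} with n ≥ m ≥ 1 on vertex set V = {x_{ij} : 1 ≤ i ≤ m, 1 ≤ j ≤ n}, a subset C of V is a minimal vertex cover of Δ_{m,n} if and only if C is obtained from V by deleting all elements in s rows and all elements in m−1−s columns, for some 0 ≤ s ≤ m−1. -/
/-- The facets of the chessboard complex `Δ_{m,n}`: placements of `m`
non-attacking rooks, one in each row. -/
def chessFacets (m n : ℕ) : Set (Finset (Fin m × Fin n)) :=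
  { F | ∃ ℓ : Fin m → Fin n, Function.Injective ℓ ∧
      F = Finset.univ.image (fun i => (i, ℓ i)) }

/-- A vertex cover of the chessboard complex: a set of squares meeting every facet. -/
def IsVertexCover (m n : ℕ) (C : Finset (Fin m × Fin n)) : Prop :=
  ∀ F ∈ chessFacets m n, (F ∩ C).Nonempty

/-- A minimal vertex cover: a vertex cover no proper subset of which is a vertex cover. -/
def IsMinimalVertexCover (m n : ℕ) (C : Finset (Fin m × Fin n)) : Prop :=
  IsVertexCover m n C ∧ ∀ D ⊂ C, ¬ IsVertexCover m n D

/-!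
By Hall's theorem a set `C` of squares meets every placement of non-attacking rooks iff it
contains a grid `S ×ˢ Tᶜ` (rows in `S`, columns outside `T`) with `#T < #S`: a placement
missing `C` is a transversal of the row-wise complements of `C`, so Hall's condition fails on
some rows `S` whose complements together use only the columns `T`. Enlarging `T` until
`#T + 1 = #S` still gives a cover, so a minimal cover is such a grid. Conversely, for `m ≤ n`
a grid `S' ×ˢ T'ᶜ` with `#T' < #S'` inside `S ×ˢ Tᶜ` has `S' ⊆ S` and `T ⊆ T'`, which for
`#T + 1 = #S` forces equality by counting.
-/

open Finset

section

variable {m n : ℕ}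

theorem isVertexCover_iff_exists_product_compl_subset (C : Finset (Fin m × Fin n)) :
    IsVertexCover m n C ↔
      ∃ (S : Finset (Fin m)) (T : Finset (Fin n)), #T < #S ∧ S ×ˢ Tᶜ ⊆ C := by
  constructor
  · intro hC
    set avoid : Fin m → Finset (Fin n) := fun i => {j | (i, j) ∉ C}
    have hno_transversal :
        ¬ ∃ ℓ : Fin m → Fin n, Function.Injective ℓ ∧ ∀ i, ℓ i ∈ avoid i := by
      rintro ⟨ℓ, hℓ, hℓC⟩
      obtain ⟨p, hp⟩ := hC _ ⟨ℓ, hℓ, rfl⟩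
      obtain ⟨hpF, hpC⟩ := mem_inter.mp hp
      obtain ⟨i, -, rfl⟩ := mem_image.mp hpF
      simpa [avoid, hpC] using hℓC i
    obtain ⟨S, hS⟩ : ∃ S : Finset (Fin m), #(S.biUnion avoid) < #S := by
      simpa using (all_card_le_biUnion_card_iff_exists_injective avoid).not.mpr hno_transversal
    refine ⟨S, S.biUnion avoid, hS, fun p hp => ?_⟩
    obtain ⟨hi, hj⟩ := mem_product.mp hp
    by_contra hpC
    exact mem_compl.mp hj (mem_biUnion.mpr ⟨p.1, hi, by simpa [avoid]⟩)
  · rintro ⟨S, T, hTS, hSC⟩ F ⟨ℓ, hℓ, rfl⟩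
    obtain ⟨j, hj, hjT⟩ := exists_mem_notMem_of_card_lt_card (s := T) (t := S.image ℓ)
      (by rwa [card_image_of_injective _ hℓ])
    obtain ⟨i, hi, rfl⟩ := mem_image.mp hj
    exact ⟨(i, ℓ i), mem_inter.mpr ⟨mem_image_of_mem _ (mem_univ i),
      hSC (mem_product.mpr ⟨hi, mem_compl.mpr hjT⟩)⟩⟩

theorem isVertexCover_product_compl {S : Finset (Fin m)} {T : Finset (Fin n)} (h : #T < #S) :
    IsVertexCover m n (S ×ˢ Tᶜ) :=
  (isVertexCover_iff_exists_product_compl_subset _).mpr ⟨S, T, h, subset_rfl⟩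

theorem subset_and_subset_of_product_compl_subset (hmn : m ≤ n) {S S' : Finset (Fin m)}
    {T T' : Finset (Fin n)} (hTS : #T < #S) (h : S ×ˢ Tᶜ ⊆ S' ×ˢ T'ᶜ) : S ⊆ S' ∧ T' ⊆ T := by
  obtain ⟨i, hi⟩ : S.Nonempty := card_pos.mp (by omega)
  obtain ⟨j, hj⟩ : Tᶜ.Nonempty := by
    rw [nonempty_iff_ne_empty, Ne, compl_eq_empty_iff]
    rintro rfl
    have := card_le_univ S
    simp only [card_univ, Fintype.card_fin] at hTS this
    omega
  refine ⟨fun i' hi' => (mem_product.mp (h (mk_mem_product hi' hj))).1, fun j' hj' => ?_⟩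
  by_contra hj'T
  exact mem_compl.mp (mem_product.mp (h (mk_mem_product hi (mem_compl.mpr hj'T)))).2 hj'

theorem isMinimalVertexCover_product_compl (hmn : m ≤ n) {S : Finset (Fin m)}
    {T : Finset (Fin n)} (h : #T + 1 = #S) : IsMinimalVertexCover m n (S ×ˢ Tᶜ) := by
  refine ⟨isVertexCover_product_compl (by omega), fun D hD hDcov => ?_⟩
  obtain ⟨S', T', hTS', hD'⟩ := (isVertexCover_iff_exists_product_compl_subset D).mp hDcov
  obtain ⟨hS', hT'⟩ := subset_and_subset_of_product_compl_subset hmn hTS' (hD'.trans hD.subset)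
  have hS'S : S' = S := eq_of_subset_of_card_le hS' (by have := card_le_card hT'; omega)
  have hTT' : T = T' := eq_of_subset_of_card_le hT' (by have := card_le_card hS'; omega)
  exact not_subset_of_ssubset hD (hS'S ▸ hTT' ▸ hD')

theorem IsMinimalVertexCover.exists_eq_product_compl (hmn : m ≤ n)
    {C : Finset (Fin m × Fin n)} (hC : IsMinimalVertexCover m n C) :
    ∃ (S : Finset (Fin m)) (T : Finset (Fin n)), #T + 1 = #S ∧ C = S ×ˢ Tᶜ := by
  obtain ⟨S, T, hTS, hSC⟩ := (isVertexCover_iff_exists_product_compl_subset C).mp hC.1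
  obtain ⟨T', hTT', hT'⟩ : ∃ T', T ⊆ T' ∧ #T' = #S - 1 :=
    exists_superset_card_eq (by omega) <| by
      have := card_le_univ S
      simp only [Fintype.card_fin] at this ⊢
      omega
  have hsub : S ×ˢ T'ᶜ ⊆ C :=
    (product_subset_product_right (compl_subset_compl.mpr hTT')).trans hSC
  refine ⟨S, T', by omega, ?_⟩
  by_contra hne
  exact hC.2 _ (ssubset_of_subset_of_ne hsub (Ne.symm hne))
    (isVertexCover_product_compl (by omega))

end

/-- A subset `C` of the vertices of `Δ_{m,n}` (`n ≥ m ≥ 1`) is a minimal vertex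
cover iff `C` is obtained from the full vertex set by deleting all squares in
`s` rows and in `m - 1 - s` columns, for some `0 ≤ s ≤ m - 1`. -/
theorem chessboard_minimal_vertex_cover (m n : ℕ) (hm : 1 ≤ m) (hmn : m ≤ n)
    (C : Finset (Fin m × Fin n)) :
    IsMinimalVertexCover m n C ↔
      ∃ s ≤ m - 1, ∃ (R : Finset (Fin m)) (Co : Finset (Fin n)),
        R.card = s ∧ Co.card = m - 1 - s ∧
        C = Finset.univ.filter (fun p : Fin m × Fin n => p.1 ∉ R ∧ p.2 ∉ Co) := by
  have hgrid (R : Finset (Fin m)) (Co : Finset (Fin n)) :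
      Finset.univ.filter (fun p : Fin m × Fin n => p.1 ∉ R ∧ p.2 ∉ Co) = Rᶜ ×ˢ Coᶜ := by
    ext p; simp
  simp only [hgrid]
  constructor
  · intro hC
    obtain ⟨S, T, hTS, rfl⟩ := hC.exists_eq_product_compl hmn
    have hSm : #S ≤ m := by simpa using card_le_univ S
    exact ⟨m - #S, by omega, Sᶜ, T, by simp [card_compl], by omega, by rw [compl_compl]⟩
  · rintro ⟨s, hs, R, Co, hR, hCo, rfl⟩
    refine isMinimalVertexCover_product_compl hmn ?_
    simp only [card_compl, Fintype.card_fin]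
    omega
end

section
/- For the chessboard complex Δ_{m,n} with n ≥ m ≥ 1, a prime ideal P of S = k[x_{ij} : i ∈ [m], j ∈ [n]] is a minimal prime of the facet ideal F(Δ_{m,n}) if and only if P is generated by the set of variables obtained from {x_{ij}} by deleting all variables in s rows and all variables in m−1−s columns, for some 0 ≤ s ≤ m−1. -/
/-!
A prime `P` contains the facet ideal iff the set of cells `(i, j)` with `x_{ij} ∈ P` meets the
support of every facet monomial, i.e. every injective `ℓ : [m] → [n]`. By Hall's theorem such a
transversal contains a rectangle `A × B` with `|A| + |B| > n`, and conversely every such rectangle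
is a transversal by pigeonhole. Hence the minimal primes are the ideals generated by the variables
of the rectangles with `|A| + |B| = n + 1`; for `m ≤ n` both sides of such a rectangle are
nonempty, so these ideals are pairwise incomparable. Deleting `s` rows and `m - 1 - s` columns
leaves exactly such a rectangle.
-/

open MvPolynomial

/-- The facet ideal of the chessboard complex `Δ_{m,n}`. -/
noncomputable def chessIdeal (k : Type) [Field k] (m n : ℕ) :
    Ideal (MvPolynomial (Fin m × Fin n) k) :=
  Ideal.span { f | ∃ ℓ : Fin m → Fin n, Function.Injective ℓ ∧
    f = ∏ i : Fin m, X (i, ℓ i) }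

open Finset

theorem Ideal.minimalPrimes_eq_of_forall {R : Type*} [CommSemiring R] {I : Ideal R}
    {F : Set (Ideal R)} (h_prime : ∀ Q ∈ F, Q.IsPrime) (h_le : ∀ Q ∈ F, I ≤ Q)
    (h_exists : ∀ P : Ideal R, P.IsPrime → I ≤ P → ∃ Q ∈ F, Q ≤ P)
    (h_antichain : ∀ Q ∈ F, ∀ Q' ∈ F, Q' ≤ Q → Q ≤ Q') :
    I.minimalPrimes = F := by
  ext P
  constructor
  · intro hP
    obtain ⟨Q, hQ, hQP⟩ := h_exists P hP.1.1 hP.1.2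
    rwa [le_antisymm (hP.2 ⟨h_prime Q hQ, h_le Q hQ⟩ hQP) hQP]
  · intro hP
    refine ⟨⟨h_prime P hP, h_le P hP⟩, fun Q' hQ' hQ'P => ?_⟩
    obtain ⟨Q, hQ, hQQ'⟩ := h_exists Q' hQ'.1 hQ'.2
    exact (h_antichain P hP Q hQ (hQQ'.trans hQ'P)).trans hQQ'

namespace MvPolynomial

variable {R σ : Type*} [CommRing R]

theorem sub_aeval_ite_mem_span_X_image (s : Set σ) [DecidablePred (· ∈ s)]
    (p : MvPolynomial σ R) :
    p - aeval (fun v => if v ∈ s then 0 else X v) p ∈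
      Ideal.span (X '' s : Set (MvPolynomial σ R)) := by
  induction p using MvPolynomial.induction_on with
  | C a => simp
  | add p q hp hq => simpa [add_sub_add_comm] using add_mem hp hq
  | mul_X p v hp =>
    by_cases hv : v ∈ s
    · simpa [hv] using Ideal.mul_mem_left _ p (Ideal.subset_span (Set.mem_image_of_mem X hv))
    · simpa [hv, ← sub_mul] using Ideal.mul_mem_right (X v) _ hp

theorem ker_aeval_ite_eq_span_X_image (s : Set σ) [DecidablePred (· ∈ s)] :
    RingHom.ker (aeval (R := R) fun v => if v ∈ s then 0 else (X v : MvPolynomial σ R)) =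
      Ideal.span (X '' s) := by
  refine le_antisymm (fun p hp => ?_) ?_
  · have h := sub_aeval_ite_mem_span_X_image s p
    rwa [(RingHom.mem_ker).mp hp, sub_zero] at h
  · rw [Ideal.span_le]
    rintro _ ⟨v, hv, rfl⟩
    simp [hv]

theorem isPrime_span_X_image [IsDomain R] (s : Set σ) :
    (Ideal.span (X '' s) : Ideal (MvPolynomial σ R)).IsPrime := by
  classical
  rw [← ker_aeval_ite_eq_span_X_image]
  exact RingHom.ker_isPrime _

theorem X_mem_span_X_image_iff [Nontrivial R] {s : Set σ} {v : σ} :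
    (X v : MvPolynomial σ R) ∈ Ideal.span (X '' s) ↔ v ∈ s := by
  simp [mem_ideal_span_X_image, support_X, Finsupp.single_apply_ne_zero]

end MvPolynomial

section Chessboard

variable {m n : ℕ}

def IsFacetTransversal (C : Set (Fin m × Fin n)) : Prop :=
  ∀ ℓ : Fin m → Fin n, Function.Injective ℓ → ∃ i, (i, ℓ i) ∈ C

theorem isFacetTransversal_product {A : Finset (Fin m)} {B : Finset (Fin n)}
    (hAB : n < #A + #B) : IsFacetTransversal (↑(A ×ˢ B) : Set (Fin m × Fin n)) := by
  intro ℓ hℓ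
  have hcard : #(univ : Finset (Fin n)) < #(A.image ℓ) + #B := by
    rwa [card_image_of_injective A hℓ, card_univ, Fintype.card_fin]
  obtain ⟨j, hj⟩ := inter_nonempty_of_card_lt_card_add_card (subset_univ _) (subset_univ _) hcard
  obtain ⟨hjA, hjB⟩ := mem_inter.mp hj
  obtain ⟨i, hi, rfl⟩ := mem_image.mp hjA
  exact ⟨i, by simpa using And.intro hi hjB⟩

theorem IsFacetTransversal.exists_product_subset {C : Set (Fin m × Fin n)}
    (hC : IsFacetTransversal C) :
    ∃ (A : Finset (Fin m)) (B : Finset (Fin n)), n < #A + #B ∧ ↑(A ×ˢ B) ⊆ C := by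
  classical
  -- `t i` lists the columns that row `i` may use; a transversal admits no system of
  -- distinct representatives, so Hall's condition fails on some set of rows `A`.
  let t : Fin m → Finset (Fin n) := fun i => {j | (i, j) ∉ C}
  have hHall : ¬ ∀ A : Finset (Fin m), #A ≤ #(A.biUnion t) := by
    intro h
    obtain ⟨ℓ, hℓ, hℓt⟩ := (all_card_le_biUnion_card_iff_exists_injective t).mp h
    obtain ⟨i, hi⟩ := hC ℓ hℓ
    simpa [t, hi] using hℓt i
  push Not at hHall
  obtain ⟨A, hA⟩ := hHall
  refine ⟨A, (A.biUnion t)ᶜ, ?_, ?_⟩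
  · have : #(A.biUnion t) ≤ n := by simpa using card_le_univ (A.biUnion t)
    rw [card_compl, Fintype.card_fin]
    omega
  · rintro ⟨i, j⟩ hij
    obtain ⟨hi, hj⟩ := mem_product.mp hij
    by_contra hC'
    exact mem_compl.mp hj (mem_biUnion.mpr ⟨i, hi, by simpa [t] using hC'⟩)

theorem eq_of_product_subset_product (hmn : m ≤ n) {A A' : Finset (Fin m)}
    {B B' : Finset (Fin n)} (hsub : A' ×ˢ B' ⊆ A ×ˢ B) (hA'B' : #A' + #B' = n + 1)
    (hAB : #A + #B = n + 1) : A' = A ∧ B' = B := by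
  have hA'm : #A' ≤ m := by simpa using card_le_univ A'
  have hB'n : #B' ≤ n := by simpa using card_le_univ B'
  obtain ⟨i₀, hi₀⟩ : A'.Nonempty := card_pos.mp (by omega)
  obtain ⟨j₀, hj₀⟩ : B'.Nonempty := card_pos.mp (by omega)
  have hA : A' ⊆ A := fun i hi => (mem_product.mp (hsub (mk_mem_product hi hj₀))).1
  have hB : B' ⊆ B := fun j hj => (mem_product.mp (hsub (mk_mem_product hi₀ hj))).2
  have := card_le_card hA
  have := card_le_card hB
  exact ⟨eq_of_subset_of_card_le hA (by omega), eq_of_subset_of_card_le hB (by omega)⟩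

variable {k : Type} [Field k]

theorem chessIdeal_le_iff {P : Ideal (MvPolynomial (Fin m × Fin n) k)} [P.IsPrime] :
    chessIdeal k m n ≤ P ↔ IsFacetTransversal {v | X v ∈ P} := by
  rw [chessIdeal, Ideal.span_le]
  constructor
  · intro h ℓ hℓ
    obtain ⟨i, -, hi⟩ := Ideal.IsPrime.prod_mem_iff.mp (h ⟨ℓ, hℓ, rfl⟩)
    exact ⟨i, hi⟩
  · rintro hC _ ⟨ℓ, hℓ, rfl⟩
    obtain ⟨i, hi⟩ := hC ℓ hℓ
    exact Ideal.IsPrime.prod_mem_iff.mpr ⟨i, mem_univ i, hi⟩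

variable (k) in
noncomputable def rectIdeal (A : Finset (Fin m)) (B : Finset (Fin n)) :
    Ideal (MvPolynomial (Fin m × Fin n) k) :=
  Ideal.span (X '' ↑(A ×ˢ B))

theorem rectIdeal_le_iff {A : Finset (Fin m)} {B : Finset (Fin n)}
    {P : Ideal (MvPolynomial (Fin m × Fin n) k)} :
    rectIdeal k A B ≤ P ↔ ↑(A ×ˢ B) ⊆ {v | X v ∈ P} := by
  rw [rectIdeal, Ideal.span_le, Set.image_subset_iff]
  rfl

theorem isPrime_rectIdeal (A : Finset (Fin m)) (B : Finset (Fin n)) :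
    (rectIdeal k A B).IsPrime :=
  isPrime_span_X_image _

theorem setOf_X_mem_rectIdeal (A : Finset (Fin m)) (B : Finset (Fin n)) :
    {v | X v ∈ rectIdeal k A B} = ↑(A ×ˢ B) :=
  Set.ext fun _ => X_mem_span_X_image_iff

theorem chessIdeal_le_rectIdeal {A : Finset (Fin m)} {B : Finset (Fin n)} (hAB : n < #A + #B) :
    chessIdeal k m n ≤ rectIdeal k A B := by
  have := isPrime_rectIdeal (k := k) A B
  rw [chessIdeal_le_iff, setOf_X_mem_rectIdeal]
  exact isFacetTransversal_product hAB

theorem minimalPrimes_chessIdeal (hmn : m ≤ n) :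
    (chessIdeal k m n).minimalPrimes =
      {P | ∃ (A : Finset (Fin m)) (B : Finset (Fin n)), #A + #B = n + 1 ∧ rectIdeal k A B = P} := by
  refine Ideal.minimalPrimes_eq_of_forall ?_ ?_ ?_ ?_
  · rintro _ ⟨A, B, -, rfl⟩
    exact isPrime_rectIdeal A B
  · rintro _ ⟨A, B, hAB, rfl⟩
    exact chessIdeal_le_rectIdeal (by omega)
  · intro P hP hIP
    obtain ⟨A, B, hAB, hsub⟩ := (chessIdeal_le_iff.mp hIP).exists_product_subset
    have hAm : #A ≤ m := by simpa using card_le_univ A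
    obtain ⟨B₁, hB₁B, hB₁⟩ := exists_subset_card_eq (s := B) (n := n + 1 - #A) (by omega)
    refine ⟨rectIdeal k A B₁, ⟨A, B₁, by omega, rfl⟩, rectIdeal_le_iff.mpr ?_⟩
    exact (coe_subset.mpr (product_subset_product_right hB₁B)).trans hsub
  · rintro _ ⟨A, B, hAB, rfl⟩ _ ⟨A', B', hA'B', rfl⟩ hle
    have hsub := rectIdeal_le_iff.mp hle
    rw [setOf_X_mem_rectIdeal, coe_subset] at hsub
    obtain ⟨rfl, rfl⟩ := eq_of_product_subset_product hmn hsub hA'B' hAB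
    rfl

end Chessboard

theorem chessboard_minimal_primes_general (k : Type) [Field k] (m n : ℕ)
    (hm : 1 ≤ m) (hmn : m ≤ n)
    (P : Ideal (MvPolynomial (Fin m × Fin n) k)) :
    P ∈ (chessIdeal k m n).minimalPrimes ↔
      ∃ s ≤ m - 1, ∃ (R : Finset (Fin m)) (Co : Finset (Fin n)),
        R.card = s ∧ Co.card = m - 1 - s ∧
        P = Ideal.span { f | ∃ i j, i ∉ R ∧ j ∉ Co ∧ f = X (i, j) } := by
  have hspan : ∀ (R : Finset (Fin m)) (Co : Finset (Fin n)),
      Ideal.span { f | ∃ i j, i ∉ R ∧ j ∉ Co ∧ f = X (i, j) } = rectIdeal k Rᶜ Coᶜ := by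
    intro R Co
    congr 1
    ext f
    simp [and_assoc, eq_comm]
  rw [minimalPrimes_chessIdeal hmn]
  constructor
  · rintro ⟨A, B, hAB, rfl⟩
    have hAm : #A ≤ m := by simpa using card_le_univ A
    have hBn : #B ≤ n := by simpa using card_le_univ B
    refine ⟨m - #A, by omega, Aᶜ, Bᶜ, by simp [card_compl], by simp [card_compl]; omega, ?_⟩
    rw [hspan, compl_compl, compl_compl]
  · rintro ⟨s, hs, R, Co, rfl, hCo, rfl⟩
    have hCon : #Co ≤ n := by simpa using card_le_univ Co
    exact ⟨Rᶜ, Coᶜ, by simp [card_compl]; omega, (hspan R Co).symm⟩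

/-- A prime ideal `P` of `S = k[x_{ij}]` is a minimal prime of the facet ideal
of the chessboard complex `Δ_{m,n}` (`n ≥ m ≥ 1`) iff `P` is generated by the
variables remaining after deleting all variables in `s` rows and in `m - 1 - s`
columns, for some `0 ≤ s ≤ m - 1`. -/
theorem chessboard_minimal_primes (k : Type) [Field k] (m n : ℕ)
    (hm : 1 ≤ m) (hmn : m ≤ n)
    (P : Ideal (MvPolynomial (Fin m × Fin n) k)) (hP : P.IsPrime) :
    P ∈ (chessIdeal k m n).minimalPrimes ↔
      ∃ s ≤ m - 1, ∃ (R : Finset (Fin m)) (Co : Finset (Fin n)),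
        R.card = s ∧ Co.card = m - 1 - s ∧
        P = Ideal.span { f | ∃ i j, i ∉ R ∧ j ∉ Co ∧ f = X (i, j) } :=
  chessboard_minimal_primes_general k m n hm hmn P
end

section
/- For integers 0 ≤ s ≤ m−1 and n ≥ m ≥ 1, the function f(s) = (n−(m−1−s))(m−s) satisfies: max over 0 ≤ s ≤ m−1 of f(s) equals (n−m+1)m if n ≥ 2m−1, and equals ⌊(n+1)²/4⌋ if n < 2m−1. -/
/-! Substituting `t = m - s`, the height is `t * (n + 1 - t)` for `t ∈ [1, m]`, a concave parabola
with vertex at `(n + 1) / 2`. If `2m ≤ n + 1` the vertex lies beyond `m` and the maximum is at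
`t = m`; otherwise it is attained at `t = ⌊(n + 1) / 2⌋`, where `t * (n + 1 - t) = ⌊(n + 1)² / 4⌋`. -/

theorem Nat.mul_sub_le_sq_div_four (k t : ℕ) : t * (k - t) ≤ k ^ 2 / 4 := by
  rcases le_total t k with htk | hkt
  · rw [Nat.le_div_iff_mul_le (by norm_num)]
    zify [htk]
    nlinarith [sq_nonneg ((k : ℤ) - 2 * t)]
  · simp [Nat.sub_eq_zero_of_le hkt]

theorem Nat.div_two_mul_sub_div_two (k : ℕ) : k / 2 * (k - k / 2) = k ^ 2 / 4 := by
  obtain ⟨t, rfl | rfl⟩ := Nat.even_or_odd' k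
  · rw [show 2 * t / 2 = t by omega, show 2 * t - t = t by omega,
      show (2 * t) ^ 2 = 4 * (t * t) by ring, Nat.mul_div_cancel_left _ (by norm_num)]
  · rw [show (2 * t + 1) / 2 = t by omega, show 2 * t + 1 - t = t + 1 by omega,
      show (2 * t + 1) ^ 2 = 1 + 4 * (t * (t + 1)) by ring, Nat.add_mul_div_left _ _ (by norm_num)]
    simp

theorem Nat.mul_sub_le_mul_sub_of_le {k t u : ℕ} (htu : t ≤ u) (hu : 2 * u ≤ k) :
    t * (k - t) ≤ u * (k - u) := by
  zify [htu.trans (by omega : u ≤ k), (by omega : u ≤ k)]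
  nlinarith

theorem chessboard_height_eq {m n s : ℕ} (hs : s < m) :
    (n - (m - 1 - s)) * (m - s) = (m - s) * (n + 1 - (m - s)) := by
  rw [mul_comm]
  congr 1
  omega

theorem chessboard_height_function_max_general (m n : ℕ) :
    (2 * m - 1 ≤ n →
      (Finset.range m).sup (fun s => (n - (m - 1 - s)) * (m - s)) = (n - m + 1) * m) ∧
    (n < 2 * m - 1 →
      (Finset.range m).sup (fun s => (n - (m - 1 - s)) * (m - s)) = (n + 1) ^ 2 / 4) := by
  constructor
  · intro h
    refine le_antisymm (Finset.sup_le fun s hs => ?_) ?_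
    · rw [chessboard_height_eq (Finset.mem_range.1 hs), mul_comm _ m,
        show n - m + 1 = n + 1 - m by omega]
      exact Nat.mul_sub_le_mul_sub_of_le (by omega) (by omega)
    rcases Nat.eq_zero_or_pos m with rfl | hm
    · simp
    refine Finset.le_sup_of_le (Finset.mem_range.2 hm) (le_of_eq ?_)
    congr 1
    omega
  · intro h
    refine le_antisymm (Finset.sup_le fun s hs => ?_) ?_
    · rw [chessboard_height_eq (Finset.mem_range.1 hs)]
      exact Nat.mul_sub_le_sq_div_four _ _
    rcases Nat.eq_zero_or_pos n with rfl | hn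
    · simp
    refine Finset.le_sup_of_le (b := m - (n + 1) / 2) (Finset.mem_range.2 (by omega)) ?_
    rw [chessboard_height_eq (by omega), Nat.sub_sub_self (by omega), Nat.div_two_mul_sub_div_two]

/-- For `n ≥ m ≥ 1`, the maximum over `0 ≤ s ≤ m - 1` of
`f(s) = (n - (m - 1 - s)) (m - s)` equals `(n - m + 1) m` when `n ≥ 2m - 1`,
and equals `⌊(n+1)²/4⌋` when `n < 2m - 1`. -/
theorem chessboard_height_function_max (m n : ℕ) (hm : 1 ≤ m) (hmn : m ≤ n) :
    (2 * m - 1 ≤ n →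
      (Finset.range m).sup (fun s => (n - (m - 1 - s)) * (m - s)) = (n - m + 1) * m) ∧
    (n < 2 * m - 1 →
      (Finset.range m).sup (fun s => (n - (m - 1 - s)) * (m - s)) = (n + 1) ^ 2 / 4) :=
  chessboard_height_function_max_general m n
end

section
/- For every t ≥ 1, F(Δ_{2,2})^t = (x_{11},x_{12})^t ∩ (x_{21},x_{22})^t ∩ (x_{11},x_{21})^t ∩ (x_{12},x_{22})^t in S = k[x_{11},x_{12},x_{21},x_{22}]. -/
/-!
All ideals involved are monomial ideals, so membership is decided monomial by monomial. A
monomial of `(x_u, x_v)^t` has degree at least `t` in `x_u, x_v`, because this partial degree is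
additive and at least `1` on the generators. Conversely, if the exponent matrix `d` of a
monomial has all row and column sums at least `t`, then `t = i + j` with `i ≤ d₁₁, d₂₂` and
`j ≤ d₁₂, d₂₁`, so the monomial is divisible by `(x₁₁x₂₂)^i (x₁₂x₂₁)^j ∈ F(Δ_{2,2})^t`.
-/

open MvPolynomial

namespace MvPolynomial

variable {σ R : Type*} [CommSemiring R]

noncomputable def weightGeIdeal (w : (σ →₀ ℕ) →+ ℕ) (n : ℕ) : Ideal (MvPolynomial σ R) :=
  restrictSupportIdeal R {d | n ≤ w d} fun d e hde (hd : n ≤ w d) => by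
    obtain ⟨c, rfl⟩ := le_iff_exists_add.1 hde
    exact hd.trans (by simp)

variable {w : (σ →₀ ℕ) →+ ℕ}

theorem mem_weightGeIdeal {n : ℕ} {f : MvPolynomial σ R} :
    f ∈ weightGeIdeal w n ↔ ∀ d ∈ f.support, n ≤ w d :=
  Iff.rfl

theorem monomial_mem_weightGeIdeal {n : ℕ} {d : σ →₀ ℕ} (h : n ≤ w d) (r : R) :
    monomial d r ∈ weightGeIdeal w n :=
  (monomial_mem_restrictSupport R).2 (Or.inl h)

theorem weightGeIdeal_mul_le (m n : ℕ) :
    weightGeIdeal (R := R) w m * weightGeIdeal w n ≤ weightGeIdeal w (m + n) := by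
  classical
  refine Ideal.mul_le.2 fun a ha b hb => mem_weightGeIdeal.2 fun d hd => ?_
  obtain ⟨x, hx, y, hy, rfl⟩ := Finset.mem_add.1 (support_mul a b hd)
  rw [map_add]
  exact add_le_add (mem_weightGeIdeal.1 ha x hx) (mem_weightGeIdeal.1 hb y hy)

theorem pow_le_weightGeIdeal {I : Ideal (MvPolynomial σ R)} (h : I ≤ weightGeIdeal w 1) :
    ∀ n, I ^ n ≤ weightGeIdeal w n
  | 0 => by
    rw [pow_zero, Ideal.one_eq_top]
    exact fun _ _ _ _ => Nat.zero_le _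
  | n + 1 => by
    rw [pow_succ]
    exact (Ideal.mul_mono (pow_le_weightGeIdeal h n) h).trans (weightGeIdeal_mul_le n 1)

theorem le_add_of_mem_span_X_pair_pow {u v : σ} {n : ℕ} {f : MvPolynomial σ R}
    (hf : f ∈ Ideal.span {X u, X v} ^ n) : ∀ d ∈ f.support, n ≤ d u + d v := by
  let w : (σ →₀ ℕ) →+ ℕ := Finsupp.applyAddHom u + Finsupp.applyAddHom v
  refine pow_le_weightGeIdeal (w := w) ?_ n hf
  rw [Ideal.span_le, Set.pair_subset_iff]
  constructor <;> exact monomial_mem_weightGeIdeal (by simp [w]) 1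

theorem mem_of_forall_support_exists_le_monomial_mem {I : Ideal (MvPolynomial σ R)}
    {f : MvPolynomial σ R} (h : ∀ d ∈ f.support, ∃ e ≤ d, monomial e 1 ∈ I) : f ∈ I := by
  have hf : f ∈ Ideal.span ((monomial · (1 : R)) '' {e | monomial e 1 ∈ I}) :=
    mem_ideal_span_monomial_image.2 fun d hd =>
      let ⟨e, hed, he⟩ := h d hd; ⟨e, he, hed⟩
  exact Ideal.span_le.2 (by rintro _ ⟨e, he, rfl⟩; exact he) hf

end MvPolynomial

theorem Ideal.pow_mul_pow_mem_span_pair_pow {A : Type*} [CommSemiring A] (a b : A) (i j : ℕ) :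
    a ^ i * b ^ j ∈ Ideal.span {a, b} ^ (i + j) :=
  pow_add (Ideal.span {a, b}) i j ▸ Ideal.mul_mem_mul
    (Ideal.pow_mem_pow (Ideal.subset_span (by simp)) i)
    (Ideal.pow_mem_pow (Ideal.subset_span (by simp)) j)

theorem Nat.exists_add_eq_of_le_row_col_sums {a b c d t : ℕ} (h₁ : t ≤ a + b) (h₂ : t ≤ c + d)
    (h₃ : t ≤ a + c) (h₄ : t ≤ b + d) : ∃ i j, i + j = t ∧ i ≤ a ∧ i ≤ d ∧ j ≤ b ∧ j ≤ c :=
  ⟨min (min a d) t, t - min (min a d) t, by omega⟩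

theorem mem_span_diagonals_pow {R : Type*} [CommSemiring R] {t : ℕ}
    {f : MvPolynomial (Fin 2 × Fin 2) R}
    (h : ∀ d ∈ f.support, t ≤ d (0, 0) + d (0, 1) ∧ t ≤ d (1, 0) + d (1, 1) ∧
      t ≤ d (0, 0) + d (1, 0) ∧ t ≤ d (0, 1) + d (1, 1)) :
    f ∈ Ideal.span {X (0, 0) * X (1, 1), X (0, 1) * X (1, 0)} ^ t := by
  refine mem_of_forall_support_exists_le_monomial_mem fun d hd => ?_
  obtain ⟨h₁, h₂, h₃, h₄⟩ := h d hd
  obtain ⟨i, j, rfl, hi₀, hi₁, hj₀, hj₁⟩ := Nat.exists_add_eq_of_le_row_col_sums h₁ h₂ h₃ h₄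
  refine ⟨.single (0, 0) i + .single (1, 1) i + (.single (0, 1) j + .single (1, 0) j), ?_, ?_⟩
  · intro p
    fin_cases p <;> simp <;> omega
  · have hmem := Ideal.pow_mul_pow_mem_span_pair_pow
      (X (0, 0) * X (1, 1) : MvPolynomial (Fin 2 × Fin 2) R) (X (0, 1) * X (1, 0)) i j
    simpa only [mul_pow, X_pow_eq_monomial, monomial_mul, mul_one] using hmem

theorem chessboard22_power_decomposition_general (k : Type) [Field k] (t : ℕ) :
    (Ideal.span {X (0, 0) * X (1, 1), X (0, 1) * X (1, 0)} :
        Ideal (MvPolynomial (Fin 2 × Fin 2) k)) ^ t =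
      (Ideal.span {X (0, 0), X (0, 1)} : Ideal (MvPolynomial (Fin 2 × Fin 2) k)) ^ t ⊓
      (Ideal.span {X (1, 0), X (1, 1)}) ^ t ⊓
      (Ideal.span {X (0, 0), X (1, 0)}) ^ t ⊓
      (Ideal.span {X (0, 1), X (1, 1)}) ^ t := by
  refine le_antisymm ?_ fun f hf => ?_
  · refine le_inf (le_inf (le_inf ?_ ?_) ?_) ?_ <;>
      refine Ideal.pow_right_mono (Ideal.span_le.2 (Set.pair_subset_iff.2 ⟨?_, ?_⟩)) t <;>
      first
        | (apply Ideal.mul_mem_right; apply Ideal.subset_span; simp; done)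
        | (apply Ideal.mul_mem_left; apply Ideal.subset_span; simp)
  · simp only [Submodule.mem_inf] at hf
    obtain ⟨⟨⟨hrow₀, hrow₁⟩, hcol₀⟩, hcol₁⟩ := hf
    exact mem_span_diagonals_pow fun d hd =>
      ⟨le_add_of_mem_span_X_pair_pow hrow₀ d hd, le_add_of_mem_span_X_pair_pow hrow₁ d hd,
        le_add_of_mem_span_X_pair_pow hcol₀ d hd, le_add_of_mem_span_X_pair_pow hcol₁ d hd⟩

/-- For every `t ≥ 1`, in `S = k[x₁₁,x₁₂,x₂₁,x₂₂]`,
`(x₁₁x₂₂, x₁₂x₂₁)^t = (x₁₁,x₁₂)^t ∩ (x₂₁,x₂₂)^t ∩ (x₁₁,x₂₁)^t ∩ (x₁₂,x₂₂)^t`. -/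
theorem chessboard22_power_decomposition (k : Type) [Field k] (t : ℕ) (ht : 1 ≤ t) :
    (Ideal.span {X (0, 0) * X (1, 1), X (0, 1) * X (1, 0)} :
        Ideal (MvPolynomial (Fin 2 × Fin 2) k)) ^ t =
      (Ideal.span {X (0, 0), X (0, 1)} : Ideal (MvPolynomial (Fin 2 × Fin 2) k)) ^ t ⊓
      (Ideal.span {X (1, 0), X (1, 1)}) ^ t ⊓
      (Ideal.span {X (0, 0), X (1, 0)}) ^ t ⊓
      (Ideal.span {X (0, 1), X (1, 1)}) ^ t :=
  chessboard22_power_decomposition_general k t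
end
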